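/- arXiv:2505.24134 — 4 statements merged into one kernel-verified Lean document; each statement's English description precedes it below -/
import Mathlib

section
/- Let μ be a joint probability measure on U × V with marginals μ_u, μ_v, and define the conditional loss L_cond(θ) = −E_{(u,v)∼μ}[f_θ(u,v)] + (1/2)E_{u∼μ_u} log E_{v∼μ_v}[exp f_θ(u,v)] + (1/2)E_{v∼μ_v} log E_{u∼μ_u}[exp f_θ(u,v)] and the joint loss L_joint(θ) = −E_{(u,v)∼μ}[f_θ(u,v)] + log E_{(u,v)∼μ_u⊗μ_v}[exp f_θ(u,v)]. Then L_cond(θ) ≤ L_joint(θ) for all θ. -/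
open MeasureTheory

lemma jensen_log_aux {U : Type*} [MeasurableSpace U] (ν : Measure U)
    [IsProbabilityMeasure ν] (g : U → ℝ) (hg : Integrable g ν)
    (hpos : ∀ᵐ u ∂ν, 0 < g u)
    (hlog : Integrable (fun u => Real.log (g u)) ν)
    {Z : ℝ} (hZ : 0 < Z) (hZg : ∫ u, g u ∂ν = Z) :
    ∫ u, Real.log (g u) ∂ν ≤ Real.log Z := by
  have h : ∀ᵐ u ∂ν, Real.log (g u) ≤ Real.log Z + g u / Z - 1 := by
    filter_upwards [hpos] with u hu
    have h1 := Real.log_le_sub_one_of_pos (div_pos hu hZ)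
    rw [Real.log_div hu.ne' hZ.ne'] at h1
    linarith
  have hint : Integrable (fun u => Real.log Z + g u / Z - 1) ν :=
    ((integrable_const _).add (hg.div_const Z)).sub (integrable_const 1)
  calc ∫ u, Real.log (g u) ∂ν ≤ ∫ u, (Real.log Z + g u / Z - 1) ∂ν :=
        integral_mono_ae hlog hint h
    _ = Real.log Z := by
        have heq : (fun u => Real.log Z + g u / Z - 1)
            = fun u => (Real.log Z - 1) + g u / Z := by funext u; ring
        rw [heq, integral_add (integrable_const _) (hg.div_const Z), integral_const,
          integral_div, hZg, div_self hZ.ne']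
        simp

/-- The conditional (CLIP) loss is bounded above by the joint loss:
`L_cond(θ) ≤ L_joint(θ)`. -/
theorem stmt2 {U V : Type*} [MeasurableSpace U] [MeasurableSpace V]
    (μ : Measure (U × V)) [IsProbabilityMeasure μ]
    (μu : Measure U) (μv : Measure V)
    [IsProbabilityMeasure μu] [IsProbabilityMeasure μv]
    (hmu : μ.map Prod.fst = μu) (hmv : μ.map Prod.snd = μv)
    (f : U × V → ℝ) (hf : Measurable f)
    (hfint : Integrable f μ)
    (hint : Integrable (fun p => Real.exp (f p)) (μu.prod μv))
    (hint2 : Integrable (fun u => Real.log (∫ v, Real.exp (f (u, v)) ∂μv)) μu)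
    (hint3 : Integrable (fun v => Real.log (∫ u, Real.exp (f (u, v)) ∂μu)) μv) :
    (- ∫ p, f p ∂μ)
        + (1/2) * ∫ u, Real.log (∫ v, Real.exp (f (u, v)) ∂μv) ∂μu
        + (1/2) * ∫ v, Real.log (∫ u, Real.exp (f (u, v)) ∂μu) ∂μv
      ≤ (- ∫ p, f p ∂μ) + Real.log (∫ p, Real.exp (f p) ∂(μu.prod μv)) := by
  set Z : ℝ := ∫ p, Real.exp (f p) ∂(μu.prod μv) with hZdef
  have hZ : 0 < Z := integral_exp_pos hint
  have hA : ∫ u, Real.log (∫ v, Real.exp (f (u, v)) ∂μv) ∂μu ≤ Real.log Z := by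
    refine jensen_log_aux μu _ hint.integral_prod_left ?_ hint2 hZ ?_
    · filter_upwards [hint.prod_right_ae] with u hu
      exact integral_exp_pos hu
    · exact (integral_prod _ hint).symm
  have hB : ∫ v, Real.log (∫ u, Real.exp (f (u, v)) ∂μu) ∂μv ≤ Real.log Z := by
    refine jensen_log_aux μv _ hint.integral_prod_right ?_ hint3 hZ ?_
    · filter_upwards [hint.prod_left_ae] with v hv
      exact integral_exp_pos hv
    · exact (integral_prod_symm _ hint).symm
  linarith
end

section
/- Let C_uu, C_vv be symmetric positive definite matrices with positive-definite square roots, C_uv a cross-covariance, and let M = C_uu^{-1/2} C_uv C_vv^{-1/2}. For 0 < r ≤ min(n,m), the minimizer of A ↦ Tr(AᵀC_uu A C_vv) − Tr(A C_vu) − Tr(Aᵀ C_uv) over the set of matrices A of rank at most r is A*(r) = C_uu^{-1/2} M_r C_vv^{-1/2}, where M_r is the best rank-r approximation of M in Frobenius norm (truncated SVD). -/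
open Matrix

/-- The square root of a positive semidefinite matrix, as `Matrix.PosSemidef.sqrt` was defined
in the older Mathlib (removed since). -/
noncomputable def Matrix.PosSemidef.sqrt {n : Type*} {𝕜 : Type*} [Fintype n] [DecidableEq n]
    [RCLike 𝕜] [PartialOrder 𝕜] {A : Matrix n n 𝕜} (hA : A.PosSemidef) : Matrix n n 𝕜 :=
  hA.1.eigenvectorUnitary.1 * diagonal ((↑) ∘ (Real.sqrt ∘ hA.1.eigenvalues)) *
  (star hA.1.eigenvectorUnitary : Matrix n n 𝕜)

/-- Squared Frobenius norm of a matrix. -/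
noncomputable def frobSq {n m : ℕ} (X : Matrix (Fin n) (Fin m) ℝ) : ℝ := (Xᵀ * X).trace

/-- The quadratic CLIP loss. -/
noncomputable def lossA {n m : ℕ} (Cuu : Matrix (Fin n) (Fin n) ℝ)
    (Cvv : Matrix (Fin m) (Fin m) ℝ) (Cuv : Matrix (Fin n) (Fin m) ℝ)
    (A : Matrix (Fin n) (Fin m) ℝ) : ℝ :=
  (Aᵀ * Cuu * A * Cvv).trace - (A * Cuvᵀ).trace - (Aᵀ * Cuv).trace

/-!
Write `Cuu = S S` and `Cvv = T T` with `S`, `T` the symmetric square roots. Completing the square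
turns the loss of `A` into `‖M - S A T‖²_F - ‖M‖²_F` with `M = S⁻¹ Cuv T⁻¹`. Since `S A T` has
rank at most that of `A`, and `A*(r)` is sent to `Mr`, minimality of `Mr` among rank-`r`
matrices transfers to minimality of `A*(r)`.
-/

namespace Matrix.PosSemidef

variable {ι : Type*} [Fintype ι] [DecidableEq ι] {A : Matrix ι ι ℝ}

theorem transpose_sqrt (hA : A.PosSemidef) : hA.sqrtᵀ = hA.sqrt := by
  rw [← conjTranspose_eq_transpose_of_trivial]
  simp only [sqrt, conjTranspose_mul, star_eq_conjTranspose, conjTranspose_conjTranspose,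
    diagonal_conjTranspose, Matrix.mul_assoc]
  congr 2

theorem sqrt_mul_self (hA : A.PosSemidef) : hA.sqrt * hA.sqrt = A := by
  have hU : (star hA.1.eigenvectorUnitary : Matrix ι ι ℝ) * hA.1.eigenvectorUnitary.1 = 1 :=
    Unitary.star_mul_self_of_mem hA.1.eigenvectorUnitary.2
  conv_rhs => rw [hA.1.spectral_theorem, Unitary.conjStarAlgAut_apply]
  simp only [sqrt, Matrix.mul_assoc]
  rw [← Matrix.mul_assoc (star _ : Matrix ι ι ℝ) _ (diagonal _ * _), hU, Matrix.one_mul,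
    ← Matrix.mul_assoc (diagonal _), diagonal_mul_diagonal]
  congr 3
  ext i
  simp [Real.mul_self_sqrt (hA.eigenvalues_nonneg i)]

end Matrix.PosSemidef

theorem Matrix.PosDef.isUnit_det_sqrt {ι : Type*} [Fintype ι] [DecidableEq ι]
    {A : Matrix ι ι ℝ} (hA : A.PosDef) : IsUnit hA.posSemidef.sqrt.det := by
  have hdet : hA.posSemidef.sqrt.det * hA.posSemidef.sqrt.det = A.det := by
    rw [← det_mul, hA.posSemidef.sqrt_mul_self]
  exact isUnit_iff_ne_zero.2 fun h => hA.det_pos.ne' (by rw [← hdet, h, zero_mul])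

theorem Matrix.rank_mul_mul_le {l m n o : Type*} [Fintype m] [Fintype n] [Fintype o] {R : Type*}
    [CommRing R] [StrongRankCondition R] (P : Matrix l m R) (X : Matrix m n R)
    (Q : Matrix n o R) : (P * X * Q).rank ≤ X.rank :=
  (rank_mul_le_left _ _).trans (rank_mul_le_right _ _)

section Loss

variable {n m : ℕ}

theorem frobSq_sub (X Y : Matrix (Fin n) (Fin m) ℝ) :
    frobSq (X - Y) = frobSq X - 2 * (Xᵀ * Y).trace + frobSq Y := by
  have hsymm : (Yᵀ * X).trace = (Xᵀ * Y).trace := by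
    rw [← trace_transpose, transpose_mul, transpose_transpose]
  simp only [frobSq, transpose_sub, Matrix.sub_mul, Matrix.mul_sub, trace_sub, hsymm]
  ring

theorem lossA_eq (Cuu : Matrix (Fin n) (Fin n) ℝ) (Cvv : Matrix (Fin m) (Fin m) ℝ)
    (Cuv A : Matrix (Fin n) (Fin m) ℝ) :
    lossA Cuu Cvv Cuv A = (Aᵀ * Cuu * A * Cvv).trace - 2 * (Aᵀ * Cuv).trace := by
  have hsymm : (A * Cuvᵀ).trace = (Aᵀ * Cuv).trace := by
    rw [← trace_transpose, transpose_mul, transpose_transpose, trace_mul_comm]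
  rw [lossA, hsymm]
  ring

theorem lossA_mul_self_eq_frobSq (S : Matrix (Fin n) (Fin n) ℝ) (T : Matrix (Fin m) (Fin m) ℝ)
    (hS : Sᵀ = S) (hT : Tᵀ = T) (hSdet : IsUnit S.det) (hTdet : IsUnit T.det)
    (Cuv A : Matrix (Fin n) (Fin m) ℝ) :
    lossA (S * S) (T * T) Cuv A
      = frobSq (S⁻¹ * Cuv * T⁻¹ - S * A * T) - frobSq (S⁻¹ * Cuv * T⁻¹) := by
  have hquad : frobSq (S * A * T) = (Aᵀ * (S * S) * A * (T * T)).trace := by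
    rw [frobSq, transpose_mul, transpose_mul, hS, hT]
    simp only [Matrix.mul_assoc]
    rw [trace_mul_comm T]
    simp only [Matrix.mul_assoc]
  have hcross : ((S⁻¹ * Cuv * T⁻¹)ᵀ * (S * A * T)).trace = (Aᵀ * Cuv).trace := by
    rw [← trace_transpose]
    simp only [transpose_mul, transpose_transpose, transpose_nonsing_inv, hS, hT,
      Matrix.mul_assoc, mul_nonsing_inv_cancel_left S _ hSdet]
    rw [trace_mul_comm, Matrix.mul_assoc, nonsing_inv_mul_cancel_right T _ hTdet]
  rw [lossA_eq, frobSq_sub, hquad, hcross]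
  ring

end Loss

theorem stmt10_general {n m : ℕ} (Cuu : Matrix (Fin n) (Fin n) ℝ) (Cvv : Matrix (Fin m) (Fin m) ℝ)
    (Cuv : Matrix (Fin n) (Fin m) ℝ) (hu : Cuu.PosDef) (hv : Cvv.PosDef)
    (r : ℕ)
    (Mr : Matrix (Fin n) (Fin m) ℝ) (hMr_rank : Mr.rank ≤ r)
    (hMr_best : ∀ N : Matrix (Fin n) (Fin m) ℝ, N.rank ≤ r →
      frobSq ((Matrix.PosSemidef.sqrt hu.posSemidef)⁻¹ * Cuv * (Matrix.PosSemidef.sqrt hv.posSemidef)⁻¹ - Mr)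
        ≤ frobSq ((Matrix.PosSemidef.sqrt hu.posSemidef)⁻¹ * Cuv * (Matrix.PosSemidef.sqrt hv.posSemidef)⁻¹ - N)) :
    ((Matrix.PosSemidef.sqrt hu.posSemidef)⁻¹ * Mr * (Matrix.PosSemidef.sqrt hv.posSemidef)⁻¹).rank ≤ r
    ∧ ∀ A : Matrix (Fin n) (Fin m) ℝ, A.rank ≤ r →
        lossA Cuu Cvv Cuv ((Matrix.PosSemidef.sqrt hu.posSemidef)⁻¹ * Mr * (Matrix.PosSemidef.sqrt hv.posSemidef)⁻¹)
          ≤ lossA Cuu Cvv Cuv A := by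
  set S := hu.posSemidef.sqrt
  set T := hv.posSemidef.sqrt
  have hSdet : IsUnit S.det := hu.isUnit_det_sqrt
  have hTdet : IsUnit T.det := hv.isUnit_det_sqrt
  have hloss := lossA_mul_self_eq_frobSq S T hu.posSemidef.transpose_sqrt
    hv.posSemidef.transpose_sqrt hSdet hTdet Cuv
  rw [← hu.posSemidef.sqrt_mul_self, ← hv.posSemidef.sqrt_mul_self]
  have hMr : S * (S⁻¹ * Mr * T⁻¹) * T = Mr := by
    rw [Matrix.mul_assoc, nonsing_inv_mul_cancel_right T _ hTdet,
      mul_nonsing_inv_cancel_left S _ hSdet]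
  refine ⟨(rank_mul_mul_le _ _ _).trans hMr_rank, fun A hA => ?_⟩
  rw [hloss, hloss, hMr, sub_le_sub_iff_right]
  exact hMr_best _ ((rank_mul_mul_le _ _ _).trans hA)

/-- Rank-constrained minimizer of the quadratic CLIP loss: with
`M = Cuu^{-1/2} Cuv Cvv^{-1/2}` and `Mr` a best rank-`r` Frobenius approximation of `M`,
the matrix `A*(r) = Cuu^{-1/2} Mr Cvv^{-1/2}` minimizes the loss over rank-≤r matrices. -/
theorem stmt10 {n m : ℕ} (Cuu : Matrix (Fin n) (Fin n) ℝ) (Cvv : Matrix (Fin m) (Fin m) ℝ)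
    (Cuv : Matrix (Fin n) (Fin m) ℝ) (hu : Cuu.PosDef) (hv : Cvv.PosDef)
    (r : ℕ) (hr : 0 < r) (hrm : r ≤ min n m)
    (Mr : Matrix (Fin n) (Fin m) ℝ) (hMr_rank : Mr.rank ≤ r)
    (hMr_best : ∀ N : Matrix (Fin n) (Fin m) ℝ, N.rank ≤ r →
      frobSq ((Matrix.PosSemidef.sqrt hu.posSemidef)⁻¹ * Cuv * (Matrix.PosSemidef.sqrt hv.posSemidef)⁻¹ - Mr)
        ≤ frobSq ((Matrix.PosSemidef.sqrt hu.posSemidef)⁻¹ * Cuv * (Matrix.PosSemidef.sqrt hv.posSemidef)⁻¹ - N)) :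
    ((Matrix.PosSemidef.sqrt hu.posSemidef)⁻¹ * Mr * (Matrix.PosSemidef.sqrt hv.posSemidef)⁻¹).rank ≤ r
    ∧ ∀ A : Matrix (Fin n) (Fin m) ℝ, A.rank ≤ r →
        lossA Cuu Cvv Cuv ((Matrix.PosSemidef.sqrt hu.posSemidef)⁻¹ * Mr * (Matrix.PosSemidef.sqrt hv.posSemidef)⁻¹)
          ≤ lossA Cuu Cvv Cuv A :=
  stmt10_general Cuu Cvv Cuv hu hv r Mr hMr_rank hMr_best
end

section
/- (Eckart–Young for weighted Frobenius norm) Let P ∈ ℝ^{n×n} and Q ∈ ℝ^{m×m} be invertible and T ∈ ℝ^{n×m}. The minimizer over rank-≤r matrices A of ‖P(A − T)Q‖_F² is A*(r) = P^{-1}(P T Q)_r Q^{-1}, where (·)_r denotes the best rank-r approximation in Frobenius norm given by truncated SVD. -/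
open Matrix

lemma frobSq_neg {n m : ℕ} (X : Matrix (Fin n) (Fin m) ℝ) : frobSq (-X) = frobSq X := by
  simp [frobSq]

/-- Eckart–Young for a weighted Frobenius norm: if `R` is a best rank-`r` Frobenius
approximation of `P T Q`, then `A*(r) = P⁻¹ R Q⁻¹` minimizes `‖P(A − T)Q‖_F²`
over rank-≤r matrices `A`. -/
theorem stmt11 {n m : ℕ} (P : Matrix (Fin n) (Fin n) ℝ) (Q : Matrix (Fin m) (Fin m) ℝ)
    (T : Matrix (Fin n) (Fin m) ℝ) (hP : IsUnit P.det) (hQ : IsUnit Q.det)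
    (r : ℕ)
    (R : Matrix (Fin n) (Fin m) ℝ) (hR_rank : R.rank ≤ r)
    (hR_best : ∀ N : Matrix (Fin n) (Fin m) ℝ, N.rank ≤ r →
      frobSq (P * T * Q - R) ≤ frobSq (P * T * Q - N)) :
    (P⁻¹ * R * Q⁻¹).rank ≤ r
    ∧ ∀ A : Matrix (Fin n) (Fin m) ℝ, A.rank ≤ r →
        frobSq (P * (P⁻¹ * R * Q⁻¹ - T) * Q) ≤ frobSq (P * (A - T) * Q) := by
  have hPinv : IsUnit P⁻¹.det := (isUnit_nonsing_inv_det_iff).2 hP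
  have hQinv : IsUnit Q⁻¹.det := (isUnit_nonsing_inv_det_iff).2 hQ
  constructor
  · rw [rank_mul_eq_left_of_isUnit_det _ _ hQinv, rank_mul_eq_right_of_isUnit_det _ _ hPinv]
    exact hR_rank
  · intro A hA
    have h1 : P * (P⁻¹ * R * Q⁻¹ - T) * Q = -(P * T * Q - R) := by
      rw [Matrix.mul_sub, Matrix.sub_mul]
      rw [show P * (P⁻¹ * R * Q⁻¹) = R * Q⁻¹ by
        rw [← Matrix.mul_assoc, ← Matrix.mul_assoc, mul_nonsing_inv _ hP, Matrix.one_mul]]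
      rw [Matrix.mul_assoc R, nonsing_inv_mul _ hQ, Matrix.mul_one]
      exact (neg_sub _ _).symm
    have h2 : P * (A - T) * Q = -(P * T * Q - P * A * Q) := by
      rw [Matrix.mul_sub, Matrix.sub_mul]; exact (neg_sub _ _).symm
    rw [h1, h2, frobSq_neg, frobSq_neg]
    apply hR_best
    rw [rank_mul_eq_left_of_isUnit_det _ _ hQ, rank_mul_eq_right_of_isUnit_det _ _ hP]
    exact hA
end

section
/- Let Ω ∈ ℝ^{m×n} have singular value decomposition UΣVᵀ with all singular values in (0,1). Then the maximizer over matrices Â ∈ ℝ^{n×m} with ‖Â‖₂ < 1 of the function Â ↦ Tr(ÂΩ) + (1/2)log|I_m − ÂᵀÂ| is Â* = V h(Σ) Uᵀ, where h(σ) = (√(1+4σ²)−1)/(2σ) is applied entrywise to the diagonal of Σ, and the maximum value is Σᵢ [Σ_ii h(Σ_ii) + (1/2)log(1 − h(Σ_ii)²)]. -/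
open Matrix

noncomputable def hfun (σ : ℝ) : ℝ := (Real.sqrt (1 + 4 * σ ^ 2) - 1) / (2 * σ)

def rdiag (n m : ℕ) (σ : ℕ → ℝ) : Matrix (Fin n) (Fin m) ℝ :=
  Matrix.of fun i j => if (i : ℕ) = (j : ℕ) then σ (i : ℕ) else 0

/-!
Writing `Â = V B Uᵀ`, both the objective and the constraint are invariant under the orthogonal
change of variables, so one may take `Ω = Σ` rectangular diagonal. Then `Tr(BΣ) = Σᵢ σᵢ Bᵢᵢ` sees
only the diagonal of `B`, while Hadamard's inequality together with
`(I − BᵀB)ⱼⱼ = 1 − Σₖ Bₖⱼ² ≤ 1 − Bⱼⱼ²` gives `log det(I − BᵀB) ≤ Σᵢ log(1 − Bᵢᵢ²)`.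
The problem thus splits into the concave scalar problems `b ↦ σ b + ½ log(1 − b²)`, maximized at
`b = h(σ)`, and `B = h(Σ)` attains every bound with equality.
-/

lemma hfun_pos {σ : ℝ} (hσ : 0 < σ) : 0 < hfun σ := by
  have : 1 < Real.sqrt (1 + 4 * σ ^ 2) := by
    rw [Real.lt_sqrt zero_le_one]; nlinarith
  unfold hfun
  exact div_pos (by linarith) (by positivity)

lemma hfun_lt_one {σ : ℝ} (hσ : 0 < σ) : hfun σ < 1 := by
  have : Real.sqrt (1 + 4 * σ ^ 2) < 1 + 2 * σ := by
    rw [Real.sqrt_lt' (by positivity)]; nlinarith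
  unfold hfun
  rw [div_lt_one (by positivity)]
  linarith

/-- `hfun σ` is the positive root of `σ (1 - h²) = h`, the critical-point equation of
`h ↦ σ h + ½ log (1 - h²)`. -/
lemma mul_one_sub_hfun_sq {σ : ℝ} (hσ : 0 < σ) : σ * (1 - hfun σ ^ 2) = hfun σ := by
  have hq := Real.sq_sqrt (show (0 : ℝ) ≤ 1 + 4 * σ ^ 2 by positivity)
  unfold hfun
  generalize Real.sqrt (1 + 4 * σ ^ 2) = q at hq ⊢
  field_simp
  linear_combination -hq

lemma one_sub_hfun_sq_pos {σ : ℝ} (hσ : 0 < σ) : 0 < 1 - hfun σ ^ 2 := by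
  nlinarith [hfun_pos hσ, hfun_lt_one hσ]

lemma mul_add_half_log_one_sub_sq_le {σ b : ℝ} (hσ : 0 < σ) (hb : b ^ 2 < 1) :
    σ * b + 1 / 2 * Real.log (1 - b ^ 2)
      ≤ σ * hfun σ + 1 / 2 * Real.log (1 - hfun σ ^ 2) := by
  set h := hfun σ
  have hh : 0 < 1 - h ^ 2 := one_sub_hfun_sq_pos hσ
  have hσh : σ = h / (1 - h ^ 2) := by
    rw [eq_div_iff hh.ne']; exact mul_one_sub_hfun_sq hσ
  have hlog : Real.log (1 - b ^ 2) - Real.log (1 - h ^ 2) ≤ (1 - b ^ 2) / (1 - h ^ 2) - 1 := by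
    rw [← Real.log_div (by linarith) hh.ne']
    exact Real.log_le_sub_one_of_pos (div_pos (by linarith) hh)
  -- the tangent-line bound of `log` leaves exactly `-(h - b)² / (2 (1 - h²)) ≤ 0`
  have hsq : σ * (b - h) + 1 / 2 * ((1 - b ^ 2) / (1 - h ^ 2) - 1)
      = -(h - b) ^ 2 / (2 * (1 - h ^ 2)) := by
    rw [hσh]; field_simp; ring
  have : -(h - b) ^ 2 / (2 * (1 - h ^ 2)) ≤ 0 :=
    div_nonpos_of_nonpos_of_nonneg (by nlinarith [sq_nonneg (h - b)]) (by linarith)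
  linarith

namespace Matrix.PosDef

variable {ι : Type*} [Fintype ι] [DecidableEq ι] {M : Matrix ι ι ℝ}

lemma log_det_le_trace_sub_card (hM : M.PosDef) :
    Real.log M.det ≤ M.trace - Fintype.card ι := by
  have hev := hM.eigenvalues_pos
  rw [hM.isHermitian.det_eq_prod_eigenvalues, hM.isHermitian.trace_eq_sum_eigenvalues]
  simp only [RCLike.ofReal_real_eq_id, id]
  rw [Real.log_prod fun i _ => (hev i).ne']
  calc ∑ i, Real.log (hM.isHermitian.eigenvalues i)
      ≤ ∑ i, (hM.isHermitian.eigenvalues i - 1) :=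
        Finset.sum_le_sum fun i _ => Real.log_le_sub_one_of_pos (hev i)
    _ = _ := by simp [Finset.sum_sub_distrib]

/-- Hadamard's inequality, from the trace bound applied to `M` rescaled to unit diagonal. -/
lemma det_le_prod_diag (hM : M.PosDef) : M.det ≤ ∏ i, M i i := by
  have hdiag (i : ι) : 0 < M i i := hM.diag_pos
  set d : ι → ℝ := fun i => (Real.sqrt (M i i))⁻¹
  have hdd (i : ι) : d i * d i = (M i i)⁻¹ := by
    simp only [d, ← mul_inv, Real.mul_self_sqrt (hdiag i).le]
  set C := star (diagonal d) * M * diagonal d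
  have hC : C.PosDef :=
    (IsUnit.posDef_star_left_conjugate_iff (isUnit_diagonal.mpr
      (Pi.isUnit_iff.mpr fun i => (inv_pos.mpr (Real.sqrt_pos.mpr (hdiag i))).ne'.isUnit))).mpr hM
  have hstar : star (diagonal d) = diagonal d := by
    rw [star_eq_conjTranspose, diagonal_conjTranspose, star_trivial]
  have htrace : C.trace = Fintype.card ι := by
    have (i : ι) : C i i = 1 := by
      simp only [C, hstar, diagonal_mul, mul_diagonal]
      rw [mul_right_comm, hdd, inv_mul_cancel₀ (hdiag i).ne']
    simp [trace, this]
  have hdet : C.det = M.det / ∏ i, M i i := by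
    have : C.det = M.det * ∏ i, (d i * d i) := by
      rw [det_mul, det_mul, hstar, det_diagonal, Finset.prod_mul_distrib]; ring
    simp only [this, hdd, Finset.prod_inv_distrib, div_eq_mul_inv]
  have := hC.log_det_le_trace_sub_card
  rw [htrace, sub_self, Real.log_nonpos_iff hC.det_pos.le, hdet,
    div_le_one (Finset.prod_pos fun i _ => hdiag i)] at this
  exact this

end Matrix.PosDef

@[to_additive]
lemma Fin.prod_univ_eq_prod_range_of_eq_one {M : Type*} [CommMonoid M] {k r : ℕ} (hrk : r ≤ k)
    (f : ℕ → M) (hf : ∀ i, r ≤ i → i < k → f i = 1) :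
    ∏ i : Fin k, f i = ∏ i ∈ Finset.range r, f i := by
  rw [Fin.prod_univ_eq_prod_range f k]
  exact (Finset.prod_subset (Finset.range_subset_range.mpr hrk)
    fun i hi hi' => hf i (by simpa using hi') (by simpa using hi)).symm

lemma Fin.sum_ite_val_eq {M : Type*} [AddCommMonoid M] {k : ℕ} (j : ℕ) (f : Fin k → M) :
    ∑ i : Fin k, (if (i : ℕ) = j then f i else 0) = if h : j < k then f ⟨j, h⟩ else 0 := by
  split_ifs with h
  · have (i : Fin k) : (i : ℕ) = j ↔ i = ⟨j, h⟩ := by simp [Fin.ext_iff]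
    simp only [this, Finset.sum_ite_eq', Finset.mem_univ, if_true]
  · exact Finset.sum_eq_zero fun i _ => if_neg (by omega)

section RectangularDiagonal

variable {m n : ℕ}

def diagEntry {α : Type*} [Zero α] (B : Matrix (Fin n) (Fin m) α) (i : ℕ) : α :=
  if h : i < n ∧ i < m then B ⟨i, h.1⟩ ⟨i, h.2⟩ else 0

lemma diagEntry_eq_zero_of_min_le {α : Type*} [Zero α] (B : Matrix (Fin n) (Fin m) α) {i : ℕ}
    (hi : min m n ≤ i) : diagEntry B i = 0 :=
  dif_neg (by omega)

lemma diagEntry_rdiag (τ : ℕ → ℝ) {i : ℕ} (hi : i < min m n) :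
    diagEntry (rdiag n m τ) i = τ i := by
  simp [diagEntry, rdiag, show i < n ∧ i < m by omega]

lemma trace_mul_rdiag (B : Matrix (Fin n) (Fin m) ℝ) (σ : ℕ → ℝ) :
    (B * rdiag m n σ).trace = ∑ i ∈ Finset.range (min m n), diagEntry B i * σ i := by
  have (j : Fin n) : (B * rdiag m n σ) j j = diagEntry B j * σ j := by
    simp only [mul_apply, rdiag, of_apply, mul_ite, mul_zero, Fin.sum_ite_val_eq, diagEntry,
      j.isLt, true_and]
    split_ifs <;> simp
  simp only [trace, diag, this]
  exact Fin.sum_univ_eq_sum_range_of_eq_zero (min_le_right m n) (fun i => diagEntry B i * σ i)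
    fun i hi _ => by simp [diagEntry_eq_zero_of_min_le B hi]

lemma one_sub_transpose_mul_self_apply_self_le (B : Matrix (Fin n) (Fin m) ℝ) (j : Fin m) :
    (1 - Bᵀ * B : Matrix (Fin m) (Fin m) ℝ) j j ≤ 1 - diagEntry B j ^ 2 := by
  have hcol : (Bᵀ * B) j j = ∑ k, B k j ^ 2 := by simp [mul_apply, sq]
  rw [Matrix.sub_apply, one_apply_eq, sub_le_sub_iff_left, hcol, diagEntry]
  split_ifs with h
  · exact Finset.single_le_sum (fun k _ => sq_nonneg (B k j))
      (Finset.mem_univ (⟨j, h.1⟩ : Fin n))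
  · simpa using Finset.sum_nonneg fun k _ => sq_nonneg (B k j)

lemma sq_diagEntry_lt_one {B : Matrix (Fin n) (Fin m) ℝ} (hB : (1 - Bᵀ * B).PosDef) (i : ℕ) :
    diagEntry B i ^ 2 < 1 := by
  by_cases hi : i < m
  · have := one_sub_transpose_mul_self_apply_self_le B ⟨i, hi⟩
    linarith [hB.diag_pos (i := ⟨i, hi⟩)]
  · simp [diagEntry, hi]

lemma rdiag_transpose_mul_self (τ : ℕ → ℝ) :
    (rdiag n m τ)ᵀ * rdiag n m τ =
      diagonal fun j : Fin m => if (j : ℕ) < n then τ j ^ 2 else 0 := by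
  ext i j
  simp only [mul_apply, transpose_apply, rdiag, of_apply, ite_mul, zero_mul, Fin.sum_ite_val_eq,
    diagonal_apply]
  split_ifs <;> simp_all [Fin.ext_iff, sq]

lemma det_one_sub_rdiag_transpose_mul_self (τ : ℕ → ℝ) :
    (1 - (rdiag n m τ)ᵀ * rdiag n m τ).det = ∏ i ∈ Finset.range (min m n), (1 - τ i ^ 2) := by
  rw [rdiag_transpose_mul_self, ← diagonal_one, diagonal_sub, det_diagonal,
    Fin.prod_univ_eq_prod_range_of_eq_one (min_le_left m n)
      (fun i => 1 - if i < n then τ i ^ 2 else 0) fun i hi _ => by simp [show ¬i < n by omega]]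
  exact Finset.prod_congr rfl fun i hi => by
    simp [show i < n from (lt_min_iff.mp (Finset.mem_range.mp hi)).2]

lemma log_det_one_sub_transpose_mul_self_le (B : Matrix (Fin n) (Fin m) ℝ)
    (hB : (1 - Bᵀ * B).PosDef) :
    Real.log (1 - Bᵀ * B).det ≤ ∑ i ∈ Finset.range (min m n), Real.log (1 - diagEntry B i ^ 2) := by
  set N : Matrix (Fin m) (Fin m) ℝ := 1 - Bᵀ * B
  have hdiag (j : Fin m) : 0 < N j j := hB.diag_pos
  calc Real.log N.det ≤ Real.log (∏ j, N j j) := Real.log_le_log hB.det_pos hB.det_le_prod_diag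
    _ = ∑ j, Real.log (N j j) := Real.log_prod fun j _ => (hdiag j).ne'
    _ ≤ ∑ j : Fin m, Real.log (1 - diagEntry B j ^ 2) := Finset.sum_le_sum fun j _ =>
        Real.log_le_log (hdiag j) (one_sub_transpose_mul_self_apply_self_le B j)
    _ = _ := Fin.sum_univ_eq_sum_range_of_eq_zero (min_le_left m n)
        (fun i => Real.log (1 - diagEntry B i ^ 2))
        fun i hi _ => by simp [diagEntry_eq_zero_of_min_le B hi]

end RectangularDiagonal

section OrthogonalInvariance

variable {ι κ : Type*} [Fintype ι] [Fintype κ] [DecidableEq ι] [DecidableEq κ]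

noncomputable def logDetObjective (S : Matrix ι κ ℝ) (A : Matrix κ ι ℝ) : ℝ :=
  (A * S).trace + 1 / 2 * Real.log (1 - Aᵀ * A).det

variable {U : Matrix ι ι ℝ} {V : Matrix κ κ ℝ}

lemma one_sub_transpose_mul_self_conj (hU : U * Uᵀ = 1) (hV : Vᵀ * V = 1) (B : Matrix κ ι ℝ) :
    1 - (V * B * Uᵀ)ᵀ * (V * B * Uᵀ) = U * (1 - Bᵀ * B) * Uᵀ := by
  have : (V * B * Uᵀ)ᵀ * (V * B * Uᵀ) = U * (Bᵀ * B) * Uᵀ := by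
    simp only [transpose_mul, transpose_transpose, Matrix.mul_assoc]
    rw [← Matrix.mul_assoc Vᵀ V, hV, Matrix.one_mul]
  rw [this, Matrix.mul_sub, Matrix.sub_mul, Matrix.mul_one, hU]

lemma det_conj_orthogonal (hU : Uᵀ * U = 1) (X : Matrix ι ι ℝ) : (U * X * Uᵀ).det = X.det := by
  have := congrArg det hU
  rw [det_mul, det_transpose, det_one] at this
  rw [det_mul, det_mul, det_transpose]
  linear_combination X.det * this

lemma logDetObjective_conj (hU : Uᵀ * U = 1) (hV : Vᵀ * V = 1) (S : Matrix ι κ ℝ)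
    (B : Matrix κ ι ℝ) :
    logDetObjective (U * S * Vᵀ) (V * B * Uᵀ) = logDetObjective S B := by
  have htrace : (V * B * Uᵀ * (U * S * Vᵀ)).trace = (B * S).trace := by
    rw [show V * B * Uᵀ * (U * S * Vᵀ) = V * (B * S * Vᵀ) by
      simp only [Matrix.mul_assoc, ← Matrix.mul_assoc Uᵀ U, hU, Matrix.one_mul],
      trace_mul_comm, Matrix.mul_assoc, hV, Matrix.mul_one]
  rw [logDetObjective, logDetObjective, htrace,
    one_sub_transpose_mul_self_conj (mul_eq_one_comm.mp hU) hV, det_conj_orthogonal hU]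

lemma posDef_one_sub_transpose_mul_self_conj_iff (hU : Uᵀ * U = 1) (hV : Vᵀ * V = 1)
    (B : Matrix κ ι ℝ) :
    (1 - (V * B * Uᵀ)ᵀ * (V * B * Uᵀ)).PosDef ↔ (1 - Bᵀ * B).PosDef := by
  have hUU : U * Uᵀ = 1 := mul_eq_one_comm.mp hU
  rw [one_sub_transpose_mul_self_conj hUU hV, ← conjTranspose_eq_transpose_of_trivial U,
    ← star_eq_conjTranspose]
  exact IsUnit.posDef_star_right_conjugate_iff (IsUnit.of_mul_eq_one _ hUU)

end OrthogonalInvariance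

section DiagonalCase

variable {m n : ℕ} {σ : ℕ → ℝ}

lemma logDetObjective_rdiag_hfun (hσ : ∀ i < min m n, 0 < σ i) :
    logDetObjective (rdiag m n σ) (rdiag n m fun k => hfun (σ k)) =
      ∑ i ∈ Finset.range (min m n),
        (σ i * hfun (σ i) + 1 / 2 * Real.log (1 - hfun (σ i) ^ 2)) := by
  rw [logDetObjective, trace_mul_rdiag, det_one_sub_rdiag_transpose_mul_self,
    Real.log_prod fun i hi => (one_sub_hfun_sq_pos (hσ i (Finset.mem_range.mp hi))).ne',
    Finset.mul_sum, ← Finset.sum_add_distrib]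
  exact Finset.sum_congr rfl fun i hi => by
    rw [diagEntry_rdiag _ (Finset.mem_range.mp hi), mul_comm]

lemma logDetObjective_rdiag_le (hσ : ∀ i < min m n, 0 < σ i) (B : Matrix (Fin n) (Fin m) ℝ)
    (hB : (1 - Bᵀ * B).PosDef) :
    logDetObjective (rdiag m n σ) B ≤
      ∑ i ∈ Finset.range (min m n),
        (σ i * hfun (σ i) + 1 / 2 * Real.log (1 - hfun (σ i) ^ 2)) :=
  calc logDetObjective (rdiag m n σ) B
      ≤ ∑ i ∈ Finset.range (min m n),
          (σ i * diagEntry B i + 1 / 2 * Real.log (1 - diagEntry B i ^ 2)) := by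
        rw [logDetObjective, trace_mul_rdiag, Finset.sum_add_distrib, ← Finset.mul_sum]
        simp only [mul_comm (diagEntry B _) (σ _)]
        linarith [log_det_one_sub_transpose_mul_self_le B hB]
    _ ≤ _ := Finset.sum_le_sum fun i hi =>
        mul_add_half_log_one_sub_sq_le (hσ i (Finset.mem_range.mp hi)) (sq_diagEntry_lt_one hB i)

end DiagonalCase

/-- Maximizer of `Ahat ↦ Tr(AhatΩ) + (1/2)log|I − AhatᵀAhat|` over matrices of spectral norm `< 1`
(expressed as `I − AhatᵀAhat ≻ 0`): with `Ω = UΣVᵀ` and singular values in `(0,1)`,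
the maximizer is `Ahat* = V h(Σ) Uᵀ` and the maximum value is
`Σᵢ [σᵢ h(σᵢ) + (1/2)log(1 − h(σᵢ)²)]`. -/
theorem stmt14 {m n : ℕ} (Ω : Matrix (Fin m) (Fin n) ℝ)
    (U : Matrix (Fin m) (Fin m) ℝ) (V : Matrix (Fin n) (Fin n) ℝ) (σ : ℕ → ℝ)
    (hU : Uᵀ * U = 1) (hV : Vᵀ * V = 1)
    (hσ : ∀ i, i < min m n → 0 < σ i ∧ σ i < 1)
    (hSVD : Ω = U * rdiag m n σ * Vᵀ) :
    (∀ Ahat : Matrix (Fin n) (Fin m) ℝ,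
        ((1 : Matrix (Fin m) (Fin m) ℝ) - Ahatᵀ * Ahat).PosDef →
        (Ahat * Ω).trace + (1/2) * Real.log ((1 - Ahatᵀ * Ahat).det)
          ≤ ((V * rdiag n m (fun k => hfun (σ k)) * Uᵀ) * Ω).trace
            + (1/2) * Real.log
              ((1 - (V * rdiag n m (fun k => hfun (σ k)) * Uᵀ)ᵀ *
                  (V * rdiag n m (fun k => hfun (σ k)) * Uᵀ)).det))
    ∧ ((V * rdiag n m (fun k => hfun (σ k)) * Uᵀ) * Ω).trace
        + (1/2) * Real.log
          ((1 - (V * rdiag n m (fun k => hfun (σ k)) * Uᵀ)ᵀ *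
              (V * rdiag n m (fun k => hfun (σ k)) * Uᵀ)).det)
      = ∑ i ∈ Finset.range (min m n),
          (σ i * hfun (σ i) + (1/2) * Real.log (1 - (hfun (σ i)) ^ 2)) := by
  have hσpos (i : ℕ) (hi : i < min m n) : 0 < σ i := (hσ i hi).1
  have hvalue := logDetObjective_rdiag_hfun hσpos
  rw [← logDetObjective_conj hU hV, ← hSVD] at hvalue
  refine ⟨fun Ahat hA => ?_, hvalue⟩
  obtain ⟨B, rfl⟩ : ∃ B, Ahat = V * B * Uᵀ :=
    ⟨Vᵀ * Ahat * U, by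
      rw [Matrix.mul_assoc, Matrix.mul_assoc, mul_eq_one_comm.mp hU, Matrix.mul_one,
        ← Matrix.mul_assoc, mul_eq_one_comm.mp hV, Matrix.one_mul]⟩
  change logDetObjective Ω (V * B * Uᵀ) ≤ logDetObjective Ω _
  rw [hvalue, hSVD, logDetObjective_conj hU hV]
  exact logDetObjective_rdiag_le hσpos B
    ((posDef_one_sub_transpose_mul_self_conj_iff hU hV B).mp hA)
end
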